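/- Let f : [0,1] → ℝ and define g : [0,1] → ℝ by g(x) := 0 for 0 ≤ x ≤ 1/2 and g(x) := 2𝓕(x) − 2 f(1/2) for 1/2 ≤ x ≤ 1, where 𝓕 is the symmetrization of f. Then g is concave and decreasing on [0,1] if and only if 𝓕 is concave on [0,1]. -/
import Mathlib


/-- Symmetrization of `f` with respect to `x = 1/2`. -/
noncomputable def symmetrization (f : ℝ → ℝ) : ℝ → ℝ :=
  fun x => (f x + f (1 - x)) / 2

set_option maxHeartbeats 1600000 in
theorem stmt10 (f g : ℝ → ℝ)
    (hg : ∀ x : ℝ, g x = if x ≤ 1 / 2 then 0 else 2 * symmetrization f x - 2 * f (1 / 2)) :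
    (ConcaveOn ℝ (Set.Icc (0:ℝ) 1) g ∧ AntitoneOn g (Set.Icc (0:ℝ) 1)) ↔
      ConcaveOn ℝ (Set.Icc (0:ℝ) 1) (symmetrization f) := by
  set S := symmetrization f with hSdef
  have hsym : ∀ t : ℝ, S (1 - t) = S t := by
    intro t
    show (f (1 - t) + f (1 - (1 - t))) / 2 = (f t + f (1 - t)) / 2
    rw [sub_sub_cancel]; ring
  have shalf : S (1/2 : ℝ) = f (1/2 : ℝ) := by
    show (f (1/2 : ℝ) + f (1 - 1/2 : ℝ)) / 2 = f (1/2 : ℝ)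
    norm_num
  have gle : ∀ t : ℝ, t ≤ 1/2 → g t = 0 := by
    intro t ht; rw [hg, if_pos ht]
  have gge : ∀ t : ℝ, 1/2 ≤ t → g t = 2 * S t - 2 * S (1/2 : ℝ) := by
    intro t ht
    rcases eq_or_lt_of_le ht with h | h
    · rw [hg, if_pos h.symm.le, ← h, shalf]; ring
    · rw [hg, if_neg (not_le.mpr h), shalf]
  constructor
  · rintro ⟨hgc, hgm⟩
    -- S is antitone on [1/2, 1]
    have hmono : AntitoneOn S (Set.Icc (1/2 : ℝ) 1) := by
      intro p hp q hq hpq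
      have h1 := hgm (⟨by linarith [hp.1], hp.2⟩ : p ∈ Set.Icc (0:ℝ) 1)
        (⟨by linarith [hq.1], hq.2⟩ : q ∈ Set.Icc (0:ℝ) 1) hpq
      rw [gge p hp.1, gge q hq.1] at h1
      linarith
    -- S is concave on [1/2, 1]
    have hcon2 : ConcaveOn ℝ (Set.Icc (1/2 : ℝ) 1) S := by
      refine ⟨convex_Icc _ _, ?_⟩
      intro x hx y hy a b ha hb hab
      have hzmem : a • x + b • y ∈ Set.Icc (1/2 : ℝ) 1 :=
        (convex_Icc (1/2 : ℝ) 1) hx hy ha hb hab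
      have h1 := hgc.2 (⟨by linarith [hx.1], hx.2⟩ : x ∈ Set.Icc (0:ℝ) 1)
        (⟨by linarith [hy.1], hy.2⟩ : y ∈ Set.Icc (0:ℝ) 1) ha hb hab
      simp only [smul_eq_mul] at h1 hzmem ⊢
      rw [gge x hx.1, gge y hy.1, gge _ hzmem.1] at h1
      have e : a * (2 * S x - 2 * S (1/2:ℝ)) + b * (2 * S y - 2 * S (1/2:ℝ))
          = 2 * (a * S x + b * S y) - 2 * S (1/2:ℝ) := by
        have hb' : b = 1 - a := by linarith
        rw [hb']; ring
      linarith
    -- key step for points whose combination lies in the right half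
    have key : ∀ x ∈ Set.Icc (0:ℝ) 1, ∀ y ∈ Set.Icc (0:ℝ) 1, ∀ a b : ℝ,
        0 ≤ a → 0 ≤ b → a + b = 1 → 1/2 ≤ a * x + b * y →
        a * S x + b * S y ≤ S (a * x + b * y) := by
      intro x hx y hy a b ha hb hab hz
      have hax : a * x ≤ a * 1 := mul_le_mul_of_nonneg_left hx.2 ha
      have hby : b * y ≤ b * 1 := mul_le_mul_of_nonneg_left hy.2 hb
      have hz1 : a * x + b * y ≤ 1 := by
        have : a * 1 + b * 1 = 1 := by linear_combination hab
        linarith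
      by_cases hx2 : 1/2 ≤ x
      · by_cases hy2 : 1/2 ≤ y
        · have := hcon2.2 (⟨hx2, hx.2⟩ : x ∈ Set.Icc (1/2:ℝ) 1)
            (⟨hy2, hy.2⟩ : y ∈ Set.Icc (1/2:ℝ) 1) ha hb hab
          simpa using this
        · push_neg at hy2
          have hy'mem : (1 - y) ∈ Set.Icc (1/2 : ℝ) 1 :=
            ⟨by linarith, by linarith [hy.1]⟩
          have hby' : b * y ≤ b * (1 - y) :=
            mul_le_mul_of_nonneg_left (by linarith) hb
          have hle : a * x + b * y ≤ a * x + b * (1 - y) := by linarith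
          have hz'1 : a * x + b * (1 - y) ≤ 1 := by
            have h1 : b * (1 - y) ≤ b * 1 := mul_le_mul_of_nonneg_left (by linarith [hy.1]) hb
            have h2 : a * 1 + b * 1 = 1 := by linear_combination hab
            linarith
          have hc := hcon2.2 (⟨hx2, hx.2⟩ : x ∈ Set.Icc (1/2:ℝ) 1) hy'mem ha hb hab
          simp only [smul_eq_mul] at hc
          have hm := hmono (⟨hz, hz1⟩ : a * x + b * y ∈ Set.Icc (1/2:ℝ) 1)
            (⟨by linarith, hz'1⟩ : a * x + b * (1 - y) ∈ Set.Icc (1/2:ℝ) 1) hle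
          rw [hsym y] at hc
          linarith
      · push_neg at hx2
        have hy2 : 1/2 ≤ y := by
          by_contra hy2
          push_neg at hy2
          rcases le_total x y with hxy | hxy
          · have h1 : a * x ≤ a * y := mul_le_mul_of_nonneg_left hxy ha
            have h2 : a * y + b * y = y := by linear_combination y * hab
            linarith
          · have h1 : b * y ≤ b * x := mul_le_mul_of_nonneg_left hxy hb
            have h2 : a * x + b * x = x := by linear_combination x * hab
            linarith
        have hx'mem : (1 - x) ∈ Set.Icc (1/2 : ℝ) 1 :=
          ⟨by linarith, by linarith [hx.1]⟩
        have hax' : a * x ≤ a * (1 - x) :=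
          mul_le_mul_of_nonneg_left (by linarith) ha
        have hle : a * x + b * y ≤ a * (1 - x) + b * y := by linarith
        have hz'1 : a * (1 - x) + b * y ≤ 1 := by
          have h1 : a * (1 - x) ≤ a * 1 := mul_le_mul_of_nonneg_left (by linarith [hx.1]) ha
          have h2 : a * 1 + b * 1 = 1 := by linear_combination hab
          linarith
        have hc := hcon2.2 hx'mem (⟨hy2, hy.2⟩ : y ∈ Set.Icc (1/2:ℝ) 1) ha hb hab
        simp only [smul_eq_mul] at hc
        have hm := hmono (⟨hz, hz1⟩ : a * x + b * y ∈ Set.Icc (1/2:ℝ) 1)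
          (⟨by linarith, hz'1⟩ : a * (1 - x) + b * y ∈ Set.Icc (1/2:ℝ) 1) hle
        rw [hsym x] at hc
        linarith
    refine ⟨convex_Icc _ _, ?_⟩
    intro x hx y hy a b ha hb hab
    simp only [smul_eq_mul]
    by_cases hz : 1/2 ≤ a * x + b * y
    · exact key x hx y hy a b ha hb hab hz
    · push_neg at hz
      have hx' : (1 - x) ∈ Set.Icc (0:ℝ) 1 := ⟨by linarith [hx.2], by linarith [hx.1]⟩
      have hy' : (1 - y) ∈ Set.Icc (0:ℝ) 1 := ⟨by linarith [hy.2], by linarith [hy.1]⟩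
      have he : a * (1 - x) + b * (1 - y) = 1 - (a * x + b * y) := by
        linear_combination hab
      have hz' : 1/2 ≤ a * (1 - x) + b * (1 - y) := by rw [he]; linarith
      have hk := key (1 - x) hx' (1 - y) hy' a b ha hb hab hz'
      rw [he, hsym x, hsym y, hsym (a * x + b * y)] at hk
      exact hk
  · intro hSc
    -- S is maximized at 1/2
    have hmax : ∀ t ∈ Set.Icc (0:ℝ) 1, S t ≤ S (1/2 : ℝ) := by
      intro t ht
      have h := hSc.2 ht (⟨by linarith [ht.2], by linarith [ht.1]⟩ :
        (1 - t) ∈ Set.Icc (0:ℝ) 1) (show (0:ℝ) ≤ 1/2 by norm_num)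
        (show (0:ℝ) ≤ 1/2 by norm_num) (show (1/2:ℝ) + 1/2 = 1 by norm_num)
      simp only [smul_eq_mul] at h
      have e : (1/2 : ℝ) * t + (1/2 : ℝ) * (1 - t) = 1/2 := by ring
      rw [e, hsym t] at h
      linarith
    -- S is antitone on [1/2, 1]
    have hmono : AntitoneOn S (Set.Icc (1/2 : ℝ) 1) := by
      intro p hp q hq hpq
      rcases eq_or_lt_of_le hq.1 with h | h
      · have hpq' : p = q := le_antisymm hpq (by rw [← h]; exact hp.1)
        rw [hpq']
      · have h2q : 0 < 2*q - 1 := by linarith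
        have hne : 2*q - 1 ≠ 0 := ne_of_gt h2q
        set t := (q - p)/(2*q - 1) with htdef
        have ht0 : 0 ≤ t := div_nonneg (by linarith) h2q.le
        have ht1 : t ≤ 1 := by
          rw [htdef, div_le_one h2q]; linarith [hp.1]
        have hmul : t * (2*q - 1) = q - p := by
          rw [htdef]; exact div_mul_cancel₀ _ hne
        have hcomb : t * (1 - q) + (1 - t) * q = p := by linear_combination -hmul
        have hc := hSc.2 (⟨by linarith [hq.2], by linarith [hq.1]⟩ :
          (1 - q) ∈ Set.Icc (0:ℝ) 1) (⟨by linarith [hq.1], hq.2⟩ :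
          q ∈ Set.Icc (0:ℝ) 1) ht0 (show (0:ℝ) ≤ 1 - t by linarith)
          (show t + (1 - t) = 1 by ring)
        simp only [smul_eq_mul] at hc
        rw [hcomb, hsym q] at hc
        have : t * S q + (1 - t) * S q = S q := by ring
        linarith
    have gnonpos : ∀ t ∈ Set.Icc (0:ℝ) 1, g t ≤ 0 := by
      intro t ht
      by_cases h : t ≤ 1/2
      · rw [gle t h]
      · push_neg at h
        rw [gge t h.le]
        linarith [hmax t ht]
    constructor
    · -- g concave
      refine ⟨convex_Icc _ _, ?_⟩
      intro x hx y hy a b ha hb hab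
      simp only [smul_eq_mul]
      have hax1 : a * x ≤ a * 1 := mul_le_mul_of_nonneg_left hx.2 ha
      have hby1 : b * y ≤ b * 1 := mul_le_mul_of_nonneg_left hy.2 hb
      have hone : a * 1 + b * 1 = 1 := by linear_combination hab
      have hz1 : a * x + b * y ≤ 1 := by linarith
      by_cases hz2 : a * x + b * y ≤ 1/2
      · rw [gle _ hz2]
        have h1 := gnonpos x hx
        have h2 := gnonpos y hy
        have h3 : a * g x ≤ 0 := mul_nonpos_of_nonneg_of_nonpos ha h1
        have h4 : b * g y ≤ 0 := mul_nonpos_of_nonneg_of_nonpos hb h2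
        linarith
      · push_neg at hz2
        rw [gge _ hz2.le]
        by_cases hx2 : 1/2 < x
        · by_cases hy2 : 1/2 < y
          · have hc := hSc.2 hx hy ha hb hab
            simp only [smul_eq_mul] at hc
            rw [gge x hx2.le, gge y hy2.le]
            have e : a * (2 * S x - 2 * S (1/2:ℝ)) + b * (2 * S y - 2 * S (1/2:ℝ))
                = 2 * (a * S x + b * S y) - 2 * S (1/2:ℝ) := by
              have hb' : b = 1 - a := by linarith
              rw [hb']; ring
            linarith
          · -- y ≤ 1/2 < x
            push_neg at hy2
            rw [gge x hx2.le, gle y hy2]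
            have hax : a * x + b * x = x := by linear_combination x * hab
            have hbyx : b * y ≤ b * x := mul_le_mul_of_nonneg_left (by linarith) hb
            have hxz : a * x + b * y ≤ x := by linarith
            have hx2' : 0 < x - 1/2 := by linarith
            have hnex : x - 1/2 ≠ 0 := ne_of_gt hx2'
            set s := (x - (a * x + b * y))/(x - 1/2) with hsdef
            have hs0 : 0 ≤ s := div_nonneg (by linarith) hx2'.le
            have hs1 : s ≤ 1 := by rw [hsdef, div_le_one hx2']; linarith
            have hmul : s * (x - 1/2) = x - (a * x + b * y) := by
              rw [hsdef]; exact div_mul_cancel₀ _ hnex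
            have hcomb : s * (1/2 : ℝ) + (1 - s) * x = a * x + b * y := by
              linear_combination -hmul
            have hsb : b ≤ s := by
              rw [hsdef, le_div_iff₀ hx2']
              have hby2 : b * y ≤ b * (1/2) := mul_le_mul_of_nonneg_left hy2 hb
              linarith
            have hc := hSc.2 ((by norm_num : (1/2:ℝ) ∈ Set.Icc (0:ℝ) 1)) hx
              hs0 (show (0:ℝ) ≤ 1 - s by linarith) (show s + (1 - s) = 1 by ring)
            simp only [smul_eq_mul] at hc
            rw [hcomb] at hc
            have hmx := hmax x hx
            have hprod : 0 ≤ (s - b) * (S (1/2:ℝ) - S x) :=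
              mul_nonneg (by linarith) (by linarith)
            have e1 : a * S x + b * S x = S x := by linear_combination S x * hab
            have e2 : a * S (1/2:ℝ) + b * S (1/2:ℝ) = S (1/2:ℝ) := by
              linear_combination S (1/2:ℝ) * hab
            nlinarith [hc, hprod, e1, e2]
        · -- x ≤ 1/2, hence 1/2 < y
          push_neg at hx2
          have hy2 : 1/2 < y := by
            by_contra hy2
            push_neg at hy2
            have h1 : a * x ≤ a * (1/2) := mul_le_mul_of_nonneg_left hx2 ha
            have h2 : b * y ≤ b * (1/2) := mul_le_mul_of_nonneg_left hy2 hb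
            have h3 : a * (1/2 : ℝ) + b * (1/2 : ℝ) = 1/2 := by
              linear_combination (1/2 : ℝ) * hab
            linarith
          rw [gge y hy2.le, gle x hx2]
          have hby : a * y + b * y = y := by linear_combination y * hab
          have haxy : a * x ≤ a * y := mul_le_mul_of_nonneg_left (by linarith) ha
          have hyz : a * x + b * y ≤ y := by linarith
          have hy2' : 0 < y - 1/2 := by linarith
          have hney : y - 1/2 ≠ 0 := ne_of_gt hy2'
          set s := (y - (a * x + b * y))/(y - 1/2) with hsdef
          have hs0 : 0 ≤ s := div_nonneg (by linarith) hy2'.le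
          have hs1 : s ≤ 1 := by rw [hsdef, div_le_one hy2']; linarith
          have hmul : s * (y - 1/2) = y - (a * x + b * y) := by
            rw [hsdef]; exact div_mul_cancel₀ _ hney
          have hcomb : s * (1/2 : ℝ) + (1 - s) * y = a * x + b * y := by
            linear_combination -hmul
          have hsa : a ≤ s := by
            rw [hsdef, le_div_iff₀ hy2']
            have hax2 : a * x ≤ a * (1/2) := mul_le_mul_of_nonneg_left hx2 ha
            have hay : a * y - a * (1/2) ≤ a * y - a * x := by linarith
            linarith
          have hc := hSc.2 ((by norm_num : (1/2:ℝ) ∈ Set.Icc (0:ℝ) 1)) hy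
            hs0 (show (0:ℝ) ≤ 1 - s by linarith) (show s + (1 - s) = 1 by ring)
          simp only [smul_eq_mul] at hc
          rw [hcomb] at hc
          have hmy := hmax y hy
          have hprod : 0 ≤ (s - a) * (S (1/2:ℝ) - S y) :=
            mul_nonneg (by linarith) (by linarith)
          have e1 : a * S y + b * S y = S y := by linear_combination S y * hab
          have e2 : a * S (1/2:ℝ) + b * S (1/2:ℝ) = S (1/2:ℝ) := by
            linear_combination S (1/2:ℝ) * hab
          nlinarith [hc, hprod, e1, e2]
    · -- g antitone
      intro p hp q hq hpq
      by_cases hq2 : q ≤ 1/2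
      · rw [gle q hq2, gle p (le_trans hpq hq2)]
      · push_neg at hq2
        rw [gge q hq2.le]
        by_cases hp2 : p ≤ 1/2
        · rw [gle p hp2]
          linarith [hmax q hq]
        · push_neg at hp2
          rw [gge p hp2.le]
          have := hmono (⟨hp2.le, hp.2⟩ : p ∈ Set.Icc (1/2:ℝ) 1)
            (⟨hq2.le, hq.2⟩ : q ∈ Set.Icc (1/2:ℝ) 1) hpq
          linarith
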